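/- arXiv:1309.5120 — 5 statements merged into one kernel-verified Lean document; each statement's English description precedes it below -/
import Mathlib

section
/- There exists a universal constant c₁ > 0 (independent of ρ, ℓ and f) with the following property: for every ρ ∈ [0,1], every ℓ ∈ ℕ, and every function f : Ω → ℝ that depends only on the coordinates {η(1),…,η(ℓ)} and satisfies ∫ f dν_σ = 0 for every σ ∈ [0,1], one has the spectral gap inequality ∫ f² dν_ρ ≤ c₁ ℓ² Σ_{x=1}^{ℓ−1} ∫ (∇_{x,x+1} f)² dν_ρ. -/
open MeasureTheory

/-- Configuration space `Ω = {0,1}^ℤ` (with `Bool` encoding occupation). -/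
abbrev Conf := ℤ → Bool

/-- `ν` is the Bernoulli product measure of density `σ` on `{0,1}^ℤ`: a probability measure
under which the coordinates are i.i.d. with `ν(η(x)=1) = σ`, characterized by its values on
cylinder sets. -/
def IsBernoulliProduct (σ : ℝ) (ν : Measure Conf) : Prop :=
  IsProbabilityMeasure ν ∧
    ∀ (A : Finset ℤ) (b : ℤ → Bool),
      ν {η : Conf | ∀ x ∈ A, η x = b x}
        = ∏ x ∈ A, (if b x then ENNReal.ofReal σ else ENNReal.ofReal (1 - σ))

/-- `f` depends only on the coordinates in `A`. -/
def DependsOnCoords (f : Conf → ℝ) (A : Finset ℤ) : Prop :=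
  ∀ η ξ : Conf, (∀ x ∈ A, η x = ξ x) → f η = f ξ

/-- The configuration obtained from `η` by exchanging the values `η(x)` and `η(x+1)`. -/
def swapBond (x : ℤ) (η : Conf) : Conf :=
  fun z => if z = x then η (x + 1) else if z = x + 1 then η x else η z

/-!
Both sides only see the occupation variables on `[1, ℓ]`, so under `ν_ρ` they split into sums over
the `k`-particle sectors (the `k`-subsets of `[1, ℓ]`), weighted by `ρ^k (1 - ρ)^(ℓ - k)`.
Since `∫ f dν_σ = ∑ₖ σ^k (1 - σ)^(ℓ - k) ∑_{|A| = k} f(A)` vanishes for every `σ`, the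
substitution `σ = t / (1 + t)` turns it into a polynomial in `t` with infinitely many roots, so
`f` has mean zero on every sector. It remains to prove, on each sector of `[1, m]` with
`N = C(m, k)` elements, the Poincaré inequality `N ∑ g² - (∑ g)² ≤ (m² / 12) N D(g)` for the
Dirichlet form `D` of nearest-neighbour exchanges; this gives `c₁ = 1 / 12`.

The Poincaré inequality is proved by induction on `m`. Split the sector of `[1, m + 1]` according
to whether the site `m + 1` is occupied. The two within-group variances are bounded by induction
(their Dirichlet forms add up to at most `D(g)`, the bond `(m, m + 1)` being dropped). By Abel
summation the between-group term is, up to a binomial factor, `∑ⱼ j Jⱼ`, where `Jⱼ` is the flux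
of `g` through the bond `(j, j + 1)`; Cauchy–Schwarz, first in `A` for each bond and then over
the bonds, bounds it by exactly `(2m + 1) / 12 = ((m + 1)² - m²) / 12` times `N D(g)`.
-/

noncomputable section

lemma swapBond_apply (x : ℤ) (η : Conf) (z : ℤ) :
    swapBond x η z = η (Equiv.swap x (x + 1) z) := by
  unfold swapBond
  rcases eq_or_ne z x with rfl | h₁
  · simp
  rcases eq_or_ne z (x + 1) with rfl | h₂
  · simp [h₁]
  · simp [h₁, h₂, Equiv.swap_apply_of_ne_of_ne h₁ h₂]

lemma DependsOnCoords.comp₂ {f g : Conf → ℝ} {A : Finset ℤ} (hf : DependsOnCoords f A)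
    (hg : DependsOnCoords g A) (φ : ℝ → ℝ → ℝ) :
    DependsOnCoords (fun η => φ (f η) (g η)) A :=
  fun η ξ h => by simp only [hf η ξ h, hg η ξ h]

lemma DependsOnCoords.comp_swapBond {f : Conf → ℝ} {m : ℕ}
    (hf : DependsOnCoords f (Finset.Icc 1 (m : ℤ))) {x : ℤ} (hx : 1 ≤ x) (hxm : x + 1 ≤ m) :
    DependsOnCoords (fun η => f (swapBond x η)) (Finset.Icc 1 (m : ℤ)) := fun η ξ h => by
  refine hf _ _ fun z hz => ?_
  rw [swapBond_apply, swapBond_apply]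
  refine h _ ?_
  simp only [Finset.mem_Icc, Equiv.swap_apply_def] at hz ⊢
  split_ifs <;> omega

namespace SpectralGap

open Finset

lemma card_filter_mem_notMem_powersetCard {α : Type*} [DecidableEq α] {S : Finset α} {x y : α}
    (hx : x ∈ S) (hy : y ∈ S) (hxy : x ≠ y) (k : ℕ) :
    #{A ∈ S.powersetCard (k + 1) | x ∈ A ∧ y ∉ A} = (#S - 2).choose k := by
  have hfilter : {A ∈ S.powersetCard (k + 1) | x ∈ A ∧ y ∉ A}
      = (((S.erase x).erase y).powersetCard k).image (insert x) := by
    ext A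
    simp only [mem_filter, mem_powersetCard, mem_image]
    constructor
    · rintro ⟨⟨hAS, hcard⟩, hxA, hyA⟩
      refine ⟨A.erase x, ⟨fun z hz => ?_, by simp [card_erase_of_mem hxA, hcard]⟩,
        insert_erase hxA⟩
      simp only [mem_erase] at hz ⊢
      exact ⟨fun h => hyA (h ▸ hz.2), hz.1, hAS hz.2⟩
    · rintro ⟨B, ⟨hBS, hcard⟩, rfl⟩
      have hxB : x ∉ B := fun h => by simpa using hBS h
      refine ⟨⟨insert_subset hx fun z hz => ?_, by rw [card_insert_of_notMem hxB, hcard]⟩,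
        mem_insert_self x B, ?_⟩
      · exact mem_of_mem_erase (mem_of_mem_erase (hBS hz))
      · simpa [Ne.symm hxy] using fun h => by simpa using hBS h
  rw [hfilter, card_image_of_injOn, card_powersetCard,
    card_erase_of_mem (mem_erase.2 ⟨hxy.symm, hy⟩), card_erase_of_mem hx]
  · rfl
  · intro B hB C hC h
    simp only [mem_coe, mem_powersetCard] at hB hC
    have hxB : x ∉ B := fun h => by simpa using hB.1 h
    have hxC : x ∉ C := fun h => by simpa using hC.1 h
    rw [← erase_insert hxB, h, erase_insert hxC]

lemma sum_powerset_eq_sum_powersetCard {α M : Type*} [AddCommMonoid M] (s : Finset α)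
    (F : Finset α → M) :
    ∑ A ∈ s.powerset, F A = ∑ k ∈ range (#s + 1), ∑ A ∈ s.powersetCard k, F A := by
  rw [← sum_fiberwise_of_maps_to (g := card) (t := range (#s + 1))
    fun A hA => mem_range.2 (Nat.lt_succ_of_le (card_le_card (mem_powerset.1 hA)))]
  simp only [powersetCard_eq_filter]

lemma card_mul_sum_sq_eq_sq_sum {ι R : Type*} [CommSemiring R] {s : Finset ι} (hs : #s ≤ 1)
    (g : ι → R) : (#s : R) * ∑ i ∈ s, g i ^ 2 = (∑ i ∈ s, g i) ^ 2 := by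
  rcases Nat.le_one_iff_eq_zero_or_eq_one.1 hs with h | h
  · simp [card_eq_zero.1 h]
  · obtain ⟨a, rfl⟩ := card_eq_one.1 h
    simp

lemma sum_Ico_mul_sub {R : Type*} [CommRing R] (φ : ℤ → R) {b : ℤ} (hb : 1 ≤ b) :
    ∑ j ∈ Ico 1 b, (j : R) * (φ (j + 1) - φ j) = b * φ b - ∑ x ∈ Icc 1 b, φ x := by
  induction b, hb using Int.leInduction with
  | base => simp
  | succ b hb ih =>
    rw [← sum_Ico_add_eq_sum_Ico_add_one hb, ih, ← Ico_add_one_right_eq_Icc 1 (b + 1),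
      ← sum_Ico_add_eq_sum_Ico_add_one (by omega), Ico_add_one_right_eq_Icc]
    push_cast; ring

lemma sum_Ico_sq (m : ℕ) :
    ∑ j ∈ Ico (1 : ℤ) (m + 1), (j : ℝ) ^ 2 = m * (m + 1) * (2 * m + 1) / 6 := by
  induction m with
  | zero => simp
  | succ m ih =>
    rw [Nat.cast_succ, ← sum_Ico_add_eq_sum_Ico_add_one (by omega), ih]
    push_cast; ring

lemma cast_mul_choose_succ_mul_choose_pred {m : ℕ} (hm : 1 ≤ m) (k : ℕ) :
    (m : ℝ) * ((m + 1).choose (k + 1) * (m - 1).choose k)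
      = (m + 1) * (m.choose (k + 1) * m.choose k) := by
  obtain ⟨n, rfl⟩ : ∃ n, m = n + 1 := ⟨m - 1, by omega⟩
  have h₁ := congrArg (Nat.cast (R := ℝ)) (Nat.add_one_mul_choose_eq n k)
  have h₂ := congrArg (Nat.cast (R := ℝ)) (Nat.add_one_mul_choose_eq (n + 1) k)
  push_cast at h₁ h₂ ⊢
  linear_combination ((n + 1 + 1).choose (k + 1) : ℝ) * h₁ - ((n + 1).choose (k + 1) : ℝ) * h₂

/-! ### The exclusion process on a `k`-particle sector of `[1, m]` -/

def sector (m k : ℕ) : Finset (Finset ℤ) := (Icc (1 : ℤ) m).powersetCard k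

def swapSet (x : ℤ) (A : Finset ℤ) : Finset ℤ := A.map (Equiv.swap x (x + 1)).toEmbedding

def occ (x : ℤ) (A : Finset ℤ) : ℝ := if x ∈ A then 1 else 0

def dirichletForm (m k : ℕ) (g : Finset ℤ → ℝ) : ℝ :=
  ∑ j ∈ Ico (1 : ℤ) m, ∑ A ∈ sector m k, (g (swapSet j A) - g A) ^ 2

def bondFlux (m k : ℕ) (g : Finset ℤ → ℝ) (j : ℤ) : ℝ :=
  ∑ A ∈ sector m k, g A * (occ (j + 1) A - occ j A)

lemma mem_sector {m k : ℕ} {A : Finset ℤ} : A ∈ sector m k ↔ A ⊆ Icc 1 (m : ℤ) ∧ #A = k :=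
  mem_powersetCard

lemma card_sector (m k : ℕ) : #(sector m k) = m.choose k := by
  simp [sector]

lemma mem_swapSet {x y : ℤ} {A : Finset ℤ} :
    y ∈ swapSet x A ↔ Equiv.swap x (x + 1) y ∈ A := by
  simp [swapSet]

lemma swapSet_swapSet (x : ℤ) (A : Finset ℤ) : swapSet x (swapSet x A) = A := by
  ext y; simp [mem_swapSet]

lemma swapSet_insert {x y : ℤ} (hyx : y ≠ x) (hyx' : y ≠ x + 1) (B : Finset ℤ) :
    swapSet x (insert y B) = insert y (swapSet x B) := by
  rw [swapSet, map_insert, Equiv.coe_toEmbedding, Equiv.swap_apply_of_ne_of_ne hyx hyx']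
  rfl

lemma swapSet_mem_sector {m k : ℕ} {x : ℤ} (hx : 1 ≤ x) (hxm : x + 1 ≤ m) {A : Finset ℤ}
    (hA : A ∈ sector m k) : swapSet x A ∈ sector m k := by
  rw [mem_sector] at hA ⊢
  refine ⟨fun y hy => ?_, by simp [swapSet, hA.2]⟩
  have := hA.1 (mem_swapSet.1 hy)
  simp only [mem_Icc, Equiv.swap_apply_def] at this ⊢
  split_ifs at this <;> omega

lemma sum_sector_swapSet {m k : ℕ} {x : ℤ} (hx : 1 ≤ x) (hxm : x + 1 ≤ m)
    (F : Finset ℤ → ℝ) : ∑ A ∈ sector m k, F (swapSet x A) = ∑ A ∈ sector m k, F A :=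
  sum_nbij' (swapSet x) (swapSet x) (fun _ => swapSet_mem_sector hx hxm)
    (fun _ => swapSet_mem_sector hx hxm) (fun A _ => swapSet_swapSet x A)
    (fun A _ => swapSet_swapSet x A) (fun _ _ => rfl)

lemma sum_sector_succ (m k : ℕ) (F : Finset ℤ → ℝ) :
    ∑ A ∈ sector (m + 1) (k + 1), F A
      = ∑ B ∈ sector m k, F (insert ((m : ℤ) + 1) B) + ∑ A ∈ sector m (k + 1), F A := by
  have hnotMem : (m : ℤ) + 1 ∉ Icc (1 : ℤ) m := by simp
  have hIcc : Icc (1 : ℤ) ((m + 1 : ℕ) : ℤ) = insert ((m : ℤ) + 1) (Icc 1 (m : ℤ)) := by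
    push_cast; exact (insert_Icc_right_eq_Icc_add_one (by omega)).symm
  rw [sector, hIcc, powersetCard_succ_insert hnotMem, sum_union, sum_image, add_comm]
  · rfl
  · intro B hB C hC h
    simp only [mem_coe, mem_powersetCard] at hB hC
    rw [← erase_insert (notMem_mono hB.1 hnotMem), h, erase_insert (notMem_mono hC.1 hnotMem)]
  · rw [disjoint_left]
    intro A hA hA'
    obtain ⟨B, -, rfl⟩ := mem_image.1 hA'
    exact hnotMem ((mem_powersetCard.1 hA).1 (mem_insert_self _ B))

lemma occ_swapSet_left (x : ℤ) (A : Finset ℤ) : occ x (swapSet x A) = occ (x + 1) A := by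
  simp [occ, mem_swapSet]

lemma occ_swapSet_right (x : ℤ) (A : Finset ℤ) : occ (x + 1) (swapSet x A) = occ x A := by
  simp [occ, mem_swapSet]

lemma sum_occ_of_mem_sector {m k : ℕ} {A : Finset ℤ} (hA : A ∈ sector m k) :
    ∑ x ∈ Icc (1 : ℤ) m, occ x A = k := by
  rw [mem_sector] at hA
  simp [occ, inter_eq_right.2 hA.1, hA.2]

lemma sum_sector_sq_occ_sub {m k : ℕ} {j : ℤ} (hj : 1 ≤ j) (hjm : j + 1 ≤ m) :
    ∑ A ∈ sector m (k + 1), (occ (j + 1) A - occ j A) ^ 2 = 2 * ((m - 2).choose k : ℝ) := by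
  have hsq (A : Finset ℤ) : (occ (j + 1) A - occ j A) ^ 2
      = (if j ∈ A ∧ j + 1 ∉ A then 1 else 0) + (if j + 1 ∈ A ∧ j ∉ A then 1 else 0) := by
    by_cases h₁ : j ∈ A <;> by_cases h₂ : j + 1 ∈ A <;> simp [occ, h₁, h₂]
  have hj₁ : j ∈ Icc (1 : ℤ) m := mem_Icc.2 ⟨hj, by omega⟩
  have hj₂ : j + 1 ∈ Icc (1 : ℤ) m := mem_Icc.2 ⟨by omega, hjm⟩
  simp only [hsq, sum_add_distrib, sum_boole, sector]
  rw [card_filter_mem_notMem_powersetCard hj₁ hj₂ (by omega),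
    card_filter_mem_notMem_powersetCard hj₂ hj₁ (by omega)]
  simp; ring

lemma dirichletForm_nonneg (m k : ℕ) (g : Finset ℤ → ℝ) : 0 ≤ dirichletForm m k g :=
  sum_nonneg fun _ _ => sum_nonneg fun _ _ => sq_nonneg _

lemma dirichletForm_add_le_succ (m k : ℕ) (g : Finset ℤ → ℝ) :
    dirichletForm m (k + 1) g + dirichletForm m k (fun B => g (insert ((m : ℤ) + 1) B))
      ≤ dirichletForm (m + 1) (k + 1) g := by
  calc _ = ∑ j ∈ Ico (1 : ℤ) m, ∑ A ∈ sector (m + 1) (k + 1), (g (swapSet j A) - g A) ^ 2 := by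
        rw [dirichletForm, dirichletForm, ← sum_add_distrib]
        refine sum_congr rfl fun j hj => ?_
        rw [mem_Ico] at hj
        rw [sum_sector_succ, add_comm]
        simp only [swapSet_insert (by omega : (m : ℤ) + 1 ≠ j) (by omega : (m : ℤ) + 1 ≠ j + 1)]
    _ ≤ dirichletForm (m + 1) (k + 1) g :=
        sum_le_sum_of_subset_of_nonneg (Ico_subset_Ico_right (by omega))
          fun _ _ _ => sum_nonneg fun _ _ => sq_nonneg _

lemma sum_mul_bondFlux (m k : ℕ) (g : Finset ℤ → ℝ) (hm : 1 ≤ m) :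
    ∑ j ∈ Ico (1 : ℤ) m, (j : ℝ) * bondFlux m k g j
      = m * ∑ A ∈ sector m k, g A * occ m A - k * ∑ A ∈ sector m k, g A := by
  simp only [bondFlux, mul_sum]
  rw [sum_comm, ← sum_sub_distrib]
  refine sum_congr rfl fun A hA => ?_
  simp only [mul_left_comm _ (g A)]
  rw [← mul_sum, sum_Ico_mul_sub (occ · A) (by omega), sum_occ_of_mem_sector hA]
  push_cast; ring

lemma bondFlux_sq_le {m : ℕ} (k : ℕ) (g : Finset ℤ → ℝ) {j : ℤ} (hj : 1 ≤ j) (hjm : j + 1 ≤ m) :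
    bondFlux m (k + 1) g j ^ 2
      ≤ ((m - 2).choose k : ℝ) / 2 * ∑ A ∈ sector m (k + 1), (g (swapSet j A) - g A) ^ 2 := by
  have hswap : bondFlux m (k + 1) g j
      = ∑ A ∈ sector m (k + 1), g (swapSet j A) * (occ j A - occ (j + 1) A) := by
    rw [bondFlux, ← sum_sector_swapSet hj hjm (fun A => g A * (occ (j + 1) A - occ j A))]
    simp only [occ_swapSet_left, occ_swapSet_right]
  have htwice : 2 * bondFlux m (k + 1) g j
      = ∑ A ∈ sector m (k + 1), (g A - g (swapSet j A)) * (occ (j + 1) A - occ j A) := by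
    rw [two_mul]
    nth_rw 2 [hswap]
    rw [bondFlux, ← sum_add_distrib]
    exact sum_congr rfl fun A _ => by ring
  have hCS := sum_mul_sq_le_sq_mul_sq (sector m (k + 1)) (fun A => g A - g (swapSet j A))
    (fun A => occ (j + 1) A - occ j A)
  simp only [← htwice, sum_sector_sq_occ_sub hj hjm] at hCS
  rw [sum_congr rfl fun A _ => sub_sq_comm (g A) (g (swapSet j A))] at hCS
  linarith

lemma sq_sum_mul_bondFlux_le (m k : ℕ) (g : Finset ℤ → ℝ) :
    (∑ j ∈ Ico (1 : ℤ) m, (j : ℝ) * bondFlux m (k + 1) g j) ^ 2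
      ≤ (∑ j ∈ Ico (1 : ℤ) m, (j : ℝ) ^ 2)
        * (((m - 2).choose k : ℝ) / 2 * dirichletForm m (k + 1) g) := by
  refine (sum_mul_sq_le_sq_mul_sq _ _ _).trans
    (mul_le_mul_of_nonneg_left ?_ (sum_nonneg fun _ _ => sq_nonneg _))
  rw [dirichletForm, mul_sum]
  refine sum_le_sum fun j hj => ?_
  rw [mem_Ico] at hj
  exact bondFlux_sq_le k g hj.1 (by omega)

lemma between_group_sq_le {m : ℕ} (hm : 1 ≤ m) (k : ℕ) (g : Finset ℤ → ℝ) :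
    ((m.choose (k + 1) : ℝ) * ∑ B ∈ sector m k, g (insert ((m : ℤ) + 1) B)
        - m.choose k * ∑ A ∈ sector m (k + 1), g A) ^ 2
      ≤ (2 * m + 1) / 12 * (m + 1).choose (k + 1) * m.choose (k + 1) * m.choose k
        * dirichletForm (m + 1) (k + 1) g := by
  set T₁ := ∑ B ∈ sector m k, g (insert ((m : ℤ) + 1) B)
  set T₀ := ∑ A ∈ sector m (k + 1), g A
  set D := dirichletForm (m + 1) (k + 1) g
  have hflux : ∑ j ∈ Ico (1 : ℤ) (m + 1), (j : ℝ) * bondFlux (m + 1) (k + 1) g j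
      = (m + 1) * T₁ - (k + 1) * (T₁ + T₀) := by
    have hzero : ∑ A ∈ sector m (k + 1), g A * occ ((m : ℤ) + 1) A = 0 :=
      sum_eq_zero fun A hA => by
        have : (m : ℤ) + 1 ∉ A := fun h => by simpa using (mem_sector.1 hA).1 h
        simp [occ, this]
    have hocc : ∑ A ∈ sector (m + 1) (k + 1), g A * occ ((m : ℤ) + 1) A = T₁ := by
      rw [sum_sector_succ, hzero, add_zero]
      simp [occ, T₁]
    have := sum_mul_bondFlux (m + 1) (k + 1) g (by omega)
    push_cast at this
    rw [this, hocc, sum_sector_succ]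
  have hCS := sq_sum_mul_bondFlux_le (m + 1) k g
  rw [show m + 1 - 2 = m - 1 by omega] at hCS
  push_cast at hCS
  rw [hflux, sum_Ico_sq] at hCS
  have hpascal : ((m + 1).choose (k + 1) : ℝ) = m.choose k + m.choose (k + 1) := by
    exact_mod_cast Nat.choose_succ_succ m k
  have habsorb := congrArg (Nat.cast (R := ℝ)) (Nat.add_one_mul_choose_eq m k)
  push_cast at habsorb
  have hrel : ((m : ℝ) + 1) * (m.choose (k + 1) * T₁ - m.choose k * T₀)
      = (m + 1).choose (k + 1) * ((m + 1) * T₁ - (k + 1) * (T₁ + T₀)) := by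
    linear_combination -(T₁ + T₀) * habsorb - (m + 1) * T₁ * hpascal
  refine le_of_mul_le_mul_left ?_ (by positivity : (0 : ℝ) < ((m : ℝ) + 1) ^ 2)
  calc ((m : ℝ) + 1) ^ 2 * (m.choose (k + 1) * T₁ - m.choose k * T₀) ^ 2
      = ((m + 1).choose (k + 1) : ℝ) ^ 2 * ((m + 1) * T₁ - (k + 1) * (T₁ + T₀)) ^ 2 := by
        rw [← mul_pow, hrel, mul_pow]
    _ ≤ ((m + 1).choose (k + 1) : ℝ) ^ 2
          * (m * (m + 1) * (2 * m + 1) / 6 * ((m - 1).choose k / 2 * D)) := by gcongr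
    _ = _ := by
        linear_combination ((m + 1).choose (k + 1) * (m + 1) * (2 * m + 1) / 12 * D)
          * cast_mul_choose_succ_mul_choose_pred hm k

lemma sector_poincare_of_choose_le_one {m k : ℕ} (h : m.choose k ≤ 1) (g : Finset ℤ → ℝ) :
    (m.choose k : ℝ) * ∑ A ∈ sector m k, g A ^ 2 - (∑ A ∈ sector m k, g A) ^ 2
      ≤ m ^ 2 / 12 * m.choose k * dirichletForm m k g := by
  rw [← card_sector, card_mul_sum_sq_eq_sq_sum (card_sector m k ▸ h), sub_self]
  have := dirichletForm_nonneg m k g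
  positivity

lemma sector_poincare_succ {m k : ℕ} (hkm : k + 1 ≤ m)
    (ih : ∀ k (g : Finset ℤ → ℝ),
      (m.choose k : ℝ) * ∑ A ∈ sector m k, g A ^ 2 - (∑ A ∈ sector m k, g A) ^ 2
        ≤ m ^ 2 / 12 * m.choose k * dirichletForm m k g)
    (g : Finset ℤ → ℝ) :
    ((m + 1).choose (k + 1) : ℝ) * ∑ A ∈ sector (m + 1) (k + 1), g A ^ 2
        - (∑ A ∈ sector (m + 1) (k + 1), g A) ^ 2
      ≤ ((m + 1 : ℕ) : ℝ) ^ 2 / 12 * (m + 1).choose (k + 1)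
        * dirichletForm (m + 1) (k + 1) g := by
  have hpascal : ((m + 1).choose (k + 1) : ℝ) = m.choose k + m.choose (k + 1) := by
    exact_mod_cast Nat.choose_succ_succ m k
  have hn₀ : (0 : ℝ) < m.choose (k + 1) := by exact_mod_cast Nat.choose_pos hkm
  have hn₁ : (0 : ℝ) < m.choose k := by exact_mod_cast Nat.choose_pos (by omega)
  have hD := dirichletForm_add_le_succ m k g
  have hbetween := between_group_sq_le (show 1 ≤ m by omega) k g
  set g₁ : Finset ℤ → ℝ := fun B => g (insert ((m : ℤ) + 1) B)
  have ih₀ := ih (k + 1) g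
  have ih₁ := ih k g₁
  set n := ((m + 1).choose (k + 1) : ℝ)
  set n₀ := (m.choose (k + 1) : ℝ)
  set n₁ := (m.choose k : ℝ)
  set T₀ := ∑ A ∈ sector m (k + 1), g A
  set T₁ := ∑ B ∈ sector m k, g₁ B
  set U₀ := ∑ A ∈ sector m (k + 1), g A ^ 2
  set U₁ := ∑ B ∈ sector m k, g₁ B ^ 2
  set D := dirichletForm (m + 1) (k + 1) g
  have hn : 0 < n := by rw [hpascal]; positivity
  have htotal_variance : n₀ * n₁ * (n * (U₁ + U₀) - (T₁ + T₀) ^ 2)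
      = n * n₁ * (n₀ * U₀ - T₀ ^ 2) + n * n₀ * (n₁ * U₁ - T₁ ^ 2)
        + (n₀ * T₁ - n₁ * T₀) ^ 2 := by
    rw [hpascal]; ring
  rw [sum_sector_succ, sum_sector_succ, ← mul_le_mul_iff_right₀ (mul_pos hn₀ hn₁),
    htotal_variance]
  calc _ ≤ n * n₁ * (m ^ 2 / 12 * n₀ * dirichletForm m (k + 1) g)
          + n * n₀ * (m ^ 2 / 12 * n₁ * dirichletForm m k g₁)
          + (2 * m + 1) / 12 * n * n₀ * n₁ * D := by gcongr
    _ = m ^ 2 / 12 * (n * n₀ * n₁) * (dirichletForm m (k + 1) g + dirichletForm m k g₁)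
          + (2 * m + 1) / 12 * n * n₀ * n₁ * D := by ring
    _ ≤ m ^ 2 / 12 * (n * n₀ * n₁) * D + (2 * m + 1) / 12 * n * n₀ * n₁ * D := by gcongr
    _ = _ := by push_cast; ring

theorem sector_poincare (m k : ℕ) (g : Finset ℤ → ℝ) :
    (m.choose k : ℝ) * ∑ A ∈ sector m k, g A ^ 2 - (∑ A ∈ sector m k, g A) ^ 2
      ≤ m ^ 2 / 12 * m.choose k * dirichletForm m k g := by
  induction m generalizing k g with
  | zero => exact sector_poincare_of_choose_le_one (by cases k <;> simp) g
  | succ m ih =>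
    rcases k with _ | k
    · exact sector_poincare_of_choose_le_one (by simp) g
    rcases le_or_gt (k + 1) m with hkm | hmk
    · exact sector_poincare_succ hkm ih g
    · refine sector_poincare_of_choose_le_one ?_ g
      rcases (Nat.succ_le_of_lt hmk).eq_or_lt with h | h
      · simp [← h]
      · simp [Nat.choose_eq_zero_of_lt h]

lemma sum_sector_sq_le_of_sum_eq_zero {m k : ℕ} (hk : k ≤ m) {g : Finset ℤ → ℝ}
    (hg : ∑ A ∈ sector m k, g A = 0) :
    ∑ A ∈ sector m k, g A ^ 2 ≤ m ^ 2 / 12 * dirichletForm m k g := by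
  have hpos : (0 : ℝ) < m.choose k := by exact_mod_cast Nat.choose_pos hk
  have := sector_poincare m k g
  rw [hg] at this
  nlinarith

/-! ### Reduction of the Bernoulli integrals to sums over sectors -/

def confOf (A : Finset ℤ) : Conf := fun x => decide (x ∈ A)

def cylinderOf (m : ℕ) (A : Finset ℤ) : Set Conf :=
  {η | ∀ x ∈ Icc (1 : ℤ) m, η x = confOf A x}

lemma swapBond_confOf (x : ℤ) (A : Finset ℤ) :
    swapBond x (confOf A) = confOf (swapSet x A) := by
  funext z
  simp [swapBond_apply, confOf, mem_swapSet]

lemma measurableSet_cylinderOf (m : ℕ) (A : Finset ℤ) : MeasurableSet (cylinderOf m A) := by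
  simp only [cylinderOf, Set.ofPred_forall]
  exact .biInter (Set.to_countable _) fun x _ => measurable_pi_apply x (measurableSet_singleton _)

lemma mem_cylinderOf_iff {m : ℕ} {A : Finset ℤ} (hA : A ⊆ Icc 1 (m : ℤ)) {η : Conf} :
    η ∈ cylinderOf m A ↔ {x ∈ Icc (1 : ℤ) m | η x} = A := by
  simp only [cylinderOf, Set.mem_ofPred_eq, confOf, Finset.ext_iff, mem_filter]
  constructor
  · intro h x
    by_cases hx : x ∈ Icc (1 : ℤ) m
    · simp [hx, h x hx]
    · simp only [hx, false_and, false_iff]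
      exact fun h => hx (hA h)
  · intro h x hx
    have := h x
    cases hη : η x <;> simp_all

lemma eq_sum_indicator_cylinderOf {m : ℕ} {f : Conf → ℝ}
    (hf : DependsOnCoords f (Icc 1 (m : ℤ))) (η : Conf) :
    f η = ∑ A ∈ (Icc (1 : ℤ) m).powerset,
      (cylinderOf m A).indicator (fun _ => f (confOf A)) η := by
  classical
  have hind : ∀ A ∈ (Icc (1 : ℤ) m).powerset,
      (cylinderOf m A).indicator (fun _ => f (confOf A)) η
        = if {x ∈ Icc (1 : ℤ) m | η x} = A then f (confOf A) else 0 := fun A hA => by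
    rw [Set.indicator_apply, if_congr (mem_cylinderOf_iff (mem_powerset.1 hA)) rfl rfl]
  rw [sum_congr rfl hind, sum_ite_eq, if_pos (mem_powerset.2 (filter_subset _ _))]
  exact hf _ _ fun x hx => by simp [confOf, hx]

lemma measureReal_cylinderOf {σ : ℝ} {ν : Measure Conf} (hν : IsBernoulliProduct σ ν)
    (hσ : σ ∈ Set.Icc (0 : ℝ) 1) {m : ℕ} {A : Finset ℤ} (hA : A ⊆ Icc 1 (m : ℤ)) :
    ν.real (cylinderOf m A) = σ ^ #A * (1 - σ) ^ (m - #A) := by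
  have hfactor : ∀ x ∈ Icc (1 : ℤ) m,
      (if confOf A x then ENNReal.ofReal σ else ENNReal.ofReal (1 - σ)).toReal
        = if x ∈ A then σ else 1 - σ := fun x _ => by
    by_cases hx : x ∈ A
    · simp [confOf, hx, hσ.1]
    · simp [confOf, hx, hσ.2]
  rw [measureReal_def, cylinderOf, hν.2, ENNReal.toReal_prod, prod_congr rfl hfactor, prod_ite,
    prod_const, prod_const, filter_mem_eq_inter, inter_eq_right.2 hA, filter_not,
    filter_mem_eq_inter, inter_eq_right.2 hA, card_sdiff_of_subset hA, Int.card_Icc,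
    add_sub_cancel_right, Int.toNat_natCast]

lemma integral_eq_sum_sector {σ : ℝ} {ν : Measure Conf} (hν : IsBernoulliProduct σ ν)
    (hσ : σ ∈ Set.Icc (0 : ℝ) 1) {m : ℕ} {f : Conf → ℝ}
    (hf : DependsOnCoords f (Icc 1 (m : ℤ))) :
    ∫ η, f η ∂ν
      = ∑ k ∈ range (m + 1), σ ^ k * (1 - σ) ^ (m - k) * ∑ A ∈ sector m k, f (confOf A) := by
  have := hν.1
  conv_lhs => rw [funext (eq_sum_indicator_cylinderOf hf)]
  rw [integral_finsetSum _ fun A _ =>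
    (integrable_const _).indicator (measurableSet_cylinderOf m A)]
  simp only [integral_indicator_const _ (measurableSet_cylinderOf _ _), smul_eq_mul]
  rw [sum_powerset_eq_sum_powersetCard, Int.card_Icc, add_sub_cancel_right, Int.toNat_natCast]
  simp only [mul_sum]
  refine sum_congr rfl fun k _ => sum_congr rfl fun A hA => ?_
  rw [mem_sector] at hA
  rw [measureReal_cylinderOf hν hσ hA.1, hA.2]

lemma sum_integral_swapBond_eq {σ : ℝ} {ν : Measure Conf} (hν : IsBernoulliProduct σ ν)
    (hσ : σ ∈ Set.Icc (0 : ℝ) 1) {m : ℕ} {f : Conf → ℝ}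
    (hf : DependsOnCoords f (Icc 1 (m : ℤ))) :
    ∑ x ∈ Ico (1 : ℤ) m, ∫ η, (f (swapBond x η) - f η) ^ 2 ∂ν
      = ∑ k ∈ range (m + 1),
          σ ^ k * (1 - σ) ^ (m - k) * dirichletForm m k (fun A => f (confOf A)) := by
  have hbond : ∀ x ∈ Ico (1 : ℤ) m, ∫ η, (f (swapBond x η) - f η) ^ 2 ∂ν
      = ∑ k ∈ range (m + 1), σ ^ k * (1 - σ) ^ (m - k)
          * ∑ A ∈ sector m k, (f (confOf (swapSet x A)) - f (confOf A)) ^ 2 := fun x hx => by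
    rw [mem_Ico] at hx
    rw [integral_eq_sum_sector hν hσ
      ((hf.comp_swapBond hx.1 (by omega)).comp₂ hf fun a b => (a - b) ^ 2)]
    simp only [swapBond_confOf]
  rw [sum_congr rfl hbond, sum_comm]
  simp only [← mul_sum]
  rfl

lemma eq_zero_of_sum_bernstein_eq_zero {m : ℕ} {a : ℕ → ℝ}
    (h : ∀ σ ∈ Set.Icc (0 : ℝ) 1, ∑ k ∈ range (m + 1), σ ^ k * (1 - σ) ^ (m - k) * a k = 0) :
    ∀ k ∈ range (m + 1), a k = 0 := by
  set P : Polynomial ℝ := ∑ k ∈ range (m + 1), Polynomial.C (a k) * Polynomial.X ^ k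
  have hroot : ∀ t : ℝ, 0 ≤ t → P.IsRoot t := fun t ht => by
    have hσ : t / (1 + t) ∈ Set.Icc (0 : ℝ) 1 :=
      ⟨by positivity, (div_le_one (by linarith)).2 (by linarith)⟩
    have hterm : ∀ k ∈ range (m + 1),
        (t / (1 + t)) ^ k * (1 - t / (1 + t)) ^ (m - k) * a k * (1 + t) ^ m = a k * t ^ k := by
      intro k hk
      have hsplit : (1 + t) ^ m = (1 + t) ^ k * (1 + t) ^ (m - k) := by
        rw [← pow_add, Nat.add_sub_cancel' (Nat.lt_succ_iff.1 (mem_range.1 hk))]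
      have h₁ : 1 - t / (1 + t) = 1 / (1 + t) := by field_simp; ring
      have : (1 + t) ≠ 0 := by positivity
      rw [h₁, hsplit, div_pow, one_div_pow]
      field_simp
    simp only [Polynomial.IsRoot, P, Polynomial.eval_finsetSum, Polynomial.eval_mul,
      Polynomial.eval_C, Polynomial.eval_pow, Polynomial.eval_X]
    rw [← sum_congr rfl hterm, ← sum_mul, h _ hσ, zero_mul]
  have hP : P = 0 := Polynomial.eq_zero_of_infinite_isRoot P
    ((Set.Ici_infinite 0).mono fun t ht => hroot t ht)
  intro k hk
  simpa [P, Polynomial.finsetSum_coeff, Polynomial.coeff_C_mul, Polynomial.coeff_X_pow, hk]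
    using congrArg (Polynomial.coeff · k) hP

end SpectralGap

end

/-- Spectral gap inequality: there is a universal constant `c₁ > 0` such that for every
density `ρ ∈ [0,1]`, every `ℓ ∈ ℕ` and every `f` depending only on `{η(1),…,η(ℓ)}` with
`∫ f dν_σ = 0` for all `σ ∈ [0,1]`,
`∫ f² dν_ρ ≤ c₁ ℓ² Σ_{x=1}^{ℓ−1} ∫ (∇_{x,x+1} f)² dν_ρ`. -/
theorem spectral_gap_inequality :
    ∃ c₁ : ℝ, 0 < c₁ ∧
      ∀ (ν : ℝ → Measure Conf),
        (∀ σ ∈ Set.Icc (0 : ℝ) 1, IsBernoulliProduct σ (ν σ)) →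
        ∀ ρ ∈ Set.Icc (0 : ℝ) 1, ∀ ℓ : ℕ, ∀ f : Conf → ℝ,
          DependsOnCoords f (Finset.Icc 1 (ℓ : ℤ)) →
          (∀ σ ∈ Set.Icc (0 : ℝ) 1, ∫ η, f η ∂(ν σ) = 0) →
          ∫ η, f η ^ 2 ∂(ν ρ)
            ≤ c₁ * (ℓ : ℝ) ^ 2 *
              ∑ x ∈ Finset.Ico (1 : ℤ) (ℓ : ℤ),
                ∫ η, (f (swapBond x η) - f η) ^ 2 ∂(ν ρ) := by
  refine ⟨1 / 12, by norm_num, fun ν hν ρ hρ ℓ f hf hmean => ?_⟩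
  have hsector_mean : ∀ k ∈ Finset.range (ℓ + 1),
      ∑ A ∈ SpectralGap.sector ℓ k, f (SpectralGap.confOf A) = 0 :=
    SpectralGap.eq_zero_of_sum_bernstein_eq_zero fun σ hσ => by
      rw [← SpectralGap.integral_eq_sum_sector (hν σ hσ) hσ hf, hmean σ hσ]
  rw [SpectralGap.integral_eq_sum_sector (hν ρ hρ) hρ (hf.comp₂ hf fun a _ => a ^ 2),
    SpectralGap.sum_integral_swapBond_eq (hν ρ hρ) hρ hf, Finset.mul_sum]
  refine Finset.sum_le_sum fun k hk => ?_
  have hweight : 0 ≤ ρ ^ k * (1 - ρ) ^ (ℓ - k) :=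
    mul_nonneg (pow_nonneg hρ.1 _) (pow_nonneg (sub_nonneg.2 hρ.2) _)
  calc _ ≤ ρ ^ k * (1 - ρ) ^ (ℓ - k) * (ℓ ^ 2 / 12 * SpectralGap.dirichletForm ℓ k _) :=
        mul_le_mul_of_nonneg_left (SpectralGap.sum_sector_sq_le_of_sum_eq_zero
          (Nat.lt_succ_iff.1 (Finset.mem_range.1 hk)) (hsector_mean k hk)) hweight
    _ = _ := by ring
end

section
/- For every Schwartz function u ∈ 𝒮(ℝ), the discrete energies converge to the continuum energy: lim_{n→∞} (1/n) Σ_{x∈ℤ} ( n·(u((x+1)/n) − u(x/n)) )² = ∫_ℝ (u'(x))² dx. -/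
open MeasureTheory Filter

/-!
The discrete energy `E_n(u)` is exactly the integral of `(g_n)²`, where `g_n(t) = ∇ⁿ_{⌊nt⌋} u` is
the step function equal to the discrete gradient on each cell `[x/n, (x+1)/n)`. By the mean value
theorem `g_n(t) = u'(c)` for some `c` within `1/n` of `t`, so `g_n → u'` pointwise, and the decay
`(1 + |x|) |u'(x)| ≤ C` of a Schwartz function gives the integrable bound `(g_n)² ≤ 4C²/(1 + t²)`.
Dominated convergence concludes.
-/

open Set Topology

section FloorIntegral

variable {E : Type*} [NormedAddCommGroup E] [NormedSpace ℝ E] [CompleteSpace E] {g : ℤ → E}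

theorem integral_comp_floor (hg : Integrable fun s : ℝ => g ⌊s⌋) :
    ∫ s : ℝ, g ⌊s⌋ = ∑' x : ℤ, g x := by
  have hmeas (x : ℤ) : MeasurableSet (Int.floor ⁻¹' {x} : Set ℝ) := by
    rw [Int.preimage_floor_singleton]; exact measurableSet_Ico
  have hunion : ⋃ x : ℤ, (Int.floor ⁻¹' {x} : Set ℝ) = univ := by
    rw [← preimage_iUnion, iUnion_of_singleton, preimage_univ]
  rw [← setIntegral_univ, ← hunion,
    integral_iUnion hmeas (pairwise_disjoint_fiber _) (hunion ▸ hg.integrableOn)]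
  congr with x
  rw [setIntegral_congr_fun (hmeas x) (g := fun _ => g x) fun s hs => congrArg g hs,
    setIntegral_const, Int.preimage_floor_singleton, Real.volume_real_Ico]
  simp

theorem integral_comp_floor_mul {a : ℝ} (ha : 0 < a) (hg : Integrable fun t : ℝ => g ⌊a * t⌋) :
    ∫ t : ℝ, g ⌊a * t⌋ = a⁻¹ • ∑' x : ℤ, g x := by
  rw [Measure.integral_comp_mul_left (fun s => g ⌊s⌋), abs_of_pos (inv_pos.2 ha),
    integral_comp_floor ((integrable_comp_mul_left_iff (fun s => g ⌊s⌋) ha.ne').1 hg)]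

end FloorIntegral

theorem SchwartzMap.exists_one_add_abs_mul_abs_deriv_le (u : SchwartzMap ℝ ℝ) :
    ∃ C, ∀ x, (1 + |x|) * |deriv u x| ≤ C := by
  refine ⟨SchwartzMap.seminorm ℝ 0 1 u + SchwartzMap.seminorm ℝ 1 1 u, fun x => ?_⟩
  have h₀ := SchwartzMap.le_seminorm' ℝ 0 1 u x
  have h₁ := SchwartzMap.le_seminorm' ℝ 1 1 u x
  simp only [iteratedDeriv_one, Real.norm_eq_abs, pow_zero, pow_one, one_mul] at h₀ h₁
  linarith

noncomputable def discreteGrad (f : ℝ → ℝ) (n : ℕ) (x : ℤ) : ℝ :=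
  n * (f ((x + 1) / n) - f (x / n))

section DiscreteGrad

variable {f : ℝ → ℝ} {n : ℕ}

theorem measurable_discreteGrad_floor (f : ℝ → ℝ) (n : ℕ) :
    Measurable fun t : ℝ => discreteGrad f n ⌊n * t⌋ :=
  (measurable_from_top : Measurable (discreteGrad f n)).comp (measurable_const.mul measurable_id).floor

theorem exists_deriv_eq_discreteGrad_floor (hf : Differentiable ℝ f) (hn : 0 < n) (t : ℝ) :
    ∃ c, |c - t| ≤ 1 / n ∧ deriv f c = discreteGrad f n ⌊n * t⌋ := by
  have hn' : (0 : ℝ) < n := by exact_mod_cast hn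
  set x := ⌊n * t⌋
  have hxt : x / n ≤ t ∧ t < (x + 1) / n := by
    rw [div_le_iff₀ hn', lt_div_iff₀ hn', mul_comm t]
    exact ⟨Int.floor_le _, Int.lt_floor_add_one _⟩
  have hlen : ((x : ℝ) + 1) / n - x / n = 1 / n := by ring
  obtain ⟨c, hc, hslope⟩ := exists_deriv_eq_slope f (a := x / n) (b := (x + 1) / n) (by linarith) hf.continuous.continuousOn
    fun y _ => (hf y).differentiableWithinAt
  refine ⟨c, abs_sub_le_iff.2 ⟨by linarith [hc.2], by linarith [hc.1]⟩, ?_⟩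
  rw [hslope, hlen, discreteGrad]
  field_simp

theorem tendsto_discreteGrad_floor (hf : ContDiff ℝ 1 f) (t : ℝ) :
    Tendsto (fun n : ℕ => discreteGrad f n ⌊n * t⌋) atTop (𝓝 (deriv f t)) := by
  choose! c hct hc using fun n (hn : 0 < n) =>
    exists_deriv_eq_discreteGrad_floor (hf.differentiable one_ne_zero) hn t
  have hc_lim : Tendsto c atTop (𝓝 t) := by
    refine tendsto_sub_nhds_zero_iff.1 (squeeze_zero_norm' ?_ tendsto_one_div_atTop_nhds_zero_nat)
    filter_upwards [eventually_gt_atTop 0] with n hn using hct n hn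
  refine ((hf.continuous_deriv le_rfl).tendsto t |>.comp hc_lim).congr' ?_
  filter_upwards [eventually_gt_atTop 0] with n hn using hc n hn

theorem sq_discreteGrad_floor_le (hf : Differentiable ℝ f) {C : ℝ}
    (hdecay : ∀ x, (1 + |x|) * |deriv f x| ≤ C) (hn : 0 < n) (t : ℝ) :
    discreteGrad f n ⌊n * t⌋ ^ 2 ≤ 4 * C ^ 2 / (1 + t ^ 2) := by
  obtain ⟨c, hct, hc⟩ := exists_deriv_eq_discreteGrad_floor hf hn t
  have hct : |c - t| ≤ 1 := hct.trans (div_le_one_of_le₀ (by exact_mod_cast hn) n.cast_nonneg)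
  have hweight : 1 + |t| ≤ 2 * (1 + |c|) := by
    linarith [abs_sub_abs_le_abs_sub t c, abs_sub_comm c t, abs_nonneg c]
  have hbound : (1 + |t|) * |deriv f c| ≤ 2 * C := by
    nlinarith [hdecay c, abs_nonneg (deriv f c)]
  rw [le_div_iff₀ (by positivity), ← hc, ← sq_abs (deriv f c)]
  calc |deriv f c| ^ 2 * (1 + t ^ 2) ≤ ((1 + |t|) * |deriv f c|) ^ 2 := by
        nlinarith [abs_nonneg t, sq_abs t, sq_nonneg (deriv f c)]
    _ ≤ (2 * C) ^ 2 := pow_le_pow_left₀ (by positivity) hbound 2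
    _ = 4 * C ^ 2 := by ring

end DiscreteGrad

/-- For every Schwartz function `u`, the discrete energies converge to the continuum energy:
`lim_{n→∞} (1/n) Σ_{x∈ℤ} (n·(u((x+1)/n) − u(x/n)))² = ∫_ℝ (u'(x))² dx`. -/
theorem discrete_energy_tendsto_energy (u : SchwartzMap ℝ ℝ) :
    Tendsto
      (fun n : ℕ =>
        (1 / (n : ℝ)) *
          ∑' x : ℤ, ((n : ℝ) * (u (((x : ℝ) + 1) / n) - u ((x : ℝ) / n))) ^ 2)
      atTop (nhds (∫ x : ℝ, (deriv (⇑u) x) ^ 2)) := by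
  obtain ⟨C, hdecay⟩ := u.exists_one_add_abs_mul_abs_deriv_le
  set F : ℕ → ℝ → ℝ := fun n t => discreteGrad u n ⌊n * t⌋ ^ 2
  have hF_meas (n : ℕ) : AEStronglyMeasurable (F n) :=
    ((measurable_discreteGrad_floor u n).pow_const 2).aestronglyMeasurable
  have hF_bound : ∀ᶠ n in atTop, ∀ t, ‖F n t‖ ≤ 4 * C ^ 2 / (1 + t ^ 2) := by
    filter_upwards [eventually_gt_atTop 0] with n hn t
    rw [Real.norm_of_nonneg (sq_nonneg _)]
    exact sq_discreteGrad_floor_le u.differentiable hdecay hn t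
  have hbound_int : Integrable fun t : ℝ => 4 * C ^ 2 / (1 + t ^ 2) :=
    integrable_inv_one_add_sq.const_mul _
  have hlim := tendsto_integral_filter_of_dominated_convergence _ (.of_forall hF_meas)
    (hF_bound.mono fun n hn => .of_forall hn) hbound_int
    (.of_forall fun t => (tendsto_discreteGrad_floor (u.smooth 1) t).pow 2)
  refine hlim.congr' ?_
  filter_upwards [hF_bound, eventually_gt_atTop 0] with n hn_bound hn
  rw [integral_comp_floor_mul (g := fun x => discreteGrad u n x ^ 2) (by exact_mod_cast hn)
    (hbound_int.mono' (hF_meas n) (.of_forall hn_bound)), smul_eq_mul, one_div]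
  rfl
end

section
/- For every Schwartz function u ∈ 𝒮(ℝ), lim_{n→∞} (1/n) Σ_{x∈ℤ} ( n²·(u((x+1)/n) + u((x−1)/n) − 2u(x/n)) )² = ∫_ℝ (u''(x))² dx. -/
/-!
The discrete energy `(1/n) Σₓ (Δₓⁿu)²` is the integral of the step function
`t ↦ (Δⁿ_{⌊nt⌋}u)²`, so the limit is a dominated convergence statement. By Cauchy's mean value
theorem every second difference quotient is a value `u''(ξ)` at a point `ξ` within `2/n` of `t`:
continuity of `u''` gives pointwise convergence, and the decay `|u''(y)| ≤ D / (1 + y²)` gives the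
integrable majorant `(9D)² / (1 + t²)`.
-/

open MeasureTheory Filter Set Topology

theorem integral_count_eq_tsum {α : Type*} [MeasurableSpace α] [MeasurableSingletonClass α]
    [Countable α] (g : α → ℝ) : ∫ x, g x ∂Measure.count = ∑' x, g x := by
  by_cases hg : Integrable g Measure.count
  · simp [integral_countable hg]
  · have : ¬Summable g := fun hs => hg (integrable_count_iff.2 hs.abs)
    rw [integral_undef hg, tsum_eq_zero_of_not_summable this]

theorem map_floor_mul_volume {c : ℝ} (hc : 0 < c) :
    volume.map (fun t : ℝ => ⌊c * t⌋) = ENNReal.ofReal c⁻¹ • Measure.count := by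
  have hmeas : Measurable fun t : ℝ => ⌊c * t⌋ :=
    Int.measurable_floor.comp (measurable_const_mul c)
  refine Measure.ext_of_singleton fun x => ?_
  have hpre : (fun t : ℝ => ⌊c * t⌋) ⁻¹' {x} = Ico (x / c) ((x + 1) / c) := by
    ext t
    simp only [mem_preimage, mem_singleton_iff, Int.floor_eq_iff, mem_Ico, div_le_iff₀ hc,
      lt_div_iff₀ hc]
    constructor <;> rintro ⟨h₁, h₂⟩ <;> constructor <;> linarith
  rw [Measure.map_apply hmeas (measurableSet_singleton x), hpre, Real.volume_Ico,
    Measure.smul_apply, Measure.count_singleton, smul_eq_mul, mul_one, ← sub_div]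
  simp [one_div]

theorem integral_comp_floor_mul_s15 {c : ℝ} (hc : 0 < c) (g : ℤ → ℝ) :
    ∫ t, g ⌊c * t⌋ = c⁻¹ * ∑' x, g x := by
  have hmeas : Measurable fun t : ℝ => ⌊c * t⌋ :=
    Int.measurable_floor.comp (measurable_const_mul c)
  rw [← integral_map hmeas.aemeasurable measurable_from_top.aestronglyMeasurable,
    map_floor_mul_volume hc, integral_smul_measure, integral_count_eq_tsum,
    ENNReal.toReal_ofReal (by positivity), smul_eq_mul]

theorem exists_add_add_sub_two_mul_eq_sq_mul_deriv_deriv {f : ℝ → ℝ} (hf : Differentiable ℝ f)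
    (hf' : Differentiable ℝ (deriv f)) (a : ℝ) {h : ℝ} (hh : 0 < h) :
    ∃ ξ ∈ Ioo (a - h) (a + h), f (a + h) + f (a - h) - 2 * f a = h ^ 2 * deriv (deriv f) ξ := by
  have hfc := hf.continuous
  -- Cauchy's mean value theorem for `s ↦ f (a + s) + f (a - s)` against `s ↦ s ^ 2` on `[0, h]`
  obtain ⟨c, ⟨hc₀, hch⟩, hc⟩ := exists_ratio_hasDerivAt_eq_ratio_slope
    (fun s => f (a + s) + f (a - s)) (fun s => deriv f (a + s) - deriv f (a - s)) hh
    (by fun_prop) (fun s _ => ((hf (a + s)).hasDerivAt.comp_const_add a s).add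
        ((hf (a - s)).hasDerivAt.comp_const_sub a s) |>.congr_deriv (sub_eq_add_neg _ _).symm)
    (fun s => s ^ 2) (fun s => 2 * s) (by fun_prop) (fun s _ => by
      simpa using hasDerivAt_pow 2 s)
  obtain ⟨ξ, ⟨hξ₁, hξ₂⟩, hξ⟩ := exists_deriv_eq_slope (deriv f) (by linarith : a - c < a + c)
    hf'.continuous.continuousOn hf'.differentiableOn
  refine ⟨ξ, ⟨by linarith, by linarith⟩, mul_left_cancel₀ (by positivity : 2 * c ≠ 0) ?_⟩
  rw [hξ, show a + c - (a - c) = 2 * c by ring]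
  simp only [add_zero, sub_zero] at hc
  field_simp
  linear_combination -hc

noncomputable def discreteLaplacian (f : ℝ → ℝ) (n : ℕ) (x : ℤ) : ℝ :=
  (n : ℝ) ^ 2 * (f ((x + 1) / n) + f ((x - 1) / n) - 2 * f (x / n))

section DiscreteLaplacian

variable {f : ℝ → ℝ} (hf : Differentiable ℝ f) (hf' : Differentiable ℝ (deriv f))
include hf hf'

theorem exists_discreteLaplacian_floor_eq {n : ℕ} (hn : n ≠ 0) (t : ℝ) :
    ∃ ξ, |ξ - t| < 2 / n ∧ discreteLaplacian f n ⌊n * t⌋ = deriv (deriv f) ξ := by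
  have hn₀ : (0 : ℝ) < n := by positivity
  set x := ⌊n * t⌋
  obtain ⟨ξ, ⟨hξ₁, hξ₂⟩, hξ⟩ :=
    exists_add_add_sub_two_mul_eq_sq_mul_deriv_deriv hf hf' (x / n) (inv_pos.2 hn₀)
  refine ⟨ξ, ?_, ?_⟩
  · have hx₁ := Int.floor_le ((n : ℝ) * t)
    have hx₂ := Int.lt_floor_add_one ((n : ℝ) * t)
    have hξ₁' : (x : ℝ) - 1 < n * ξ := by
      calc (x : ℝ) - 1 = n * (x / n - (n : ℝ)⁻¹) := by field_simp
        _ < n * ξ := by gcongr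
    have hξ₂' : n * ξ < (x : ℝ) + 1 := by
      calc n * ξ < n * (x / n + (n : ℝ)⁻¹) := by gcongr
        _ = x + 1 := by field_simp
    rw [abs_sub_lt_iff, lt_div_iff₀ hn₀, lt_div_iff₀ hn₀]
    constructor <;> linarith
  · rw [discreteLaplacian, add_div, sub_div, one_div, hξ]
    field_simp

theorem tendsto_discreteLaplacian_floor {t : ℝ} (hf'' : ContinuousAt (deriv (deriv f)) t) :
    Tendsto (fun n : ℕ => discreteLaplacian f n ⌊n * t⌋) atTop (𝓝 (deriv (deriv f) t)) := by
  rw [Metric.tendsto_atTop]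
  intro ε hε
  obtain ⟨δ, hδ, hcont⟩ := Metric.continuousAt_iff.1 hf'' ε hε
  obtain ⟨N, hN⟩ := exists_nat_gt (2 / δ)
  have hN₀ : (0 : ℝ) < N := lt_trans (by positivity) hN
  refine ⟨N, fun n hn => ?_⟩
  have hnN : (N : ℝ) ≤ n := by exact_mod_cast hn
  have hn₀ : (0 : ℝ) < n := hN₀.trans_le hnN
  obtain ⟨ξ, hξt, hξ⟩ := exists_discreteLaplacian_floor_eq hf hf' (Nat.cast_pos.1 hn₀).ne' t
  rw [hξ]
  refine hcont (lt_of_lt_of_le hξt ?_)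
  rw [div_lt_iff₀ hδ] at hN
  rw [div_le_iff₀ hn₀]
  nlinarith

theorem abs_discreteLaplacian_floor_le {D : ℝ} (hD : ∀ y, |deriv (deriv f) y| ≤ D / (1 + y ^ 2))
    (n : ℕ) (t : ℝ) : |discreteLaplacian f n ⌊n * t⌋| ≤ 9 * D / (1 + t ^ 2) := by
  have hD₀ : 0 ≤ D := by simpa using (abs_nonneg _).trans (hD 0)
  rcases eq_or_ne n 0 with rfl | hn
  · simp only [discreteLaplacian, CharP.cast_eq_zero, ne_eq, OfNat.ofNat_ne_zero,
      not_false_eq_true, zero_pow, zero_mul, abs_zero]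
    positivity
  obtain ⟨ξ, hξt, hξ⟩ := exists_discreteLaplacian_floor_eq hf hf' hn t
  have hξt' : |ξ - t| ≤ 2 :=
    hξt.le.trans (div_le_self zero_le_two (by exact_mod_cast Nat.one_le_iff_ne_zero.2 hn))
  rw [hξ]
  refine (hD ξ).trans ?_
  rw [div_le_div_iff₀ (by positivity) (by positivity)]
  have : (ξ - t) ^ 2 ≤ 4 := by nlinarith [abs_nonneg (ξ - t), sq_abs (ξ - t)]
  -- `1 + t ^ 2 ≤ 1 + 2 ξ ^ 2 + 2 (ξ - t) ^ 2 ≤ 9 (1 + ξ ^ 2)`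
  nlinarith [sq_nonneg (2 * ξ - t)]

theorem tendsto_discreteLaplacian_energy (hf'' : Continuous (deriv (deriv f))) {D : ℝ}
    (hD : ∀ y, |deriv (deriv f) y| ≤ D / (1 + y ^ 2)) :
    Tendsto (fun n : ℕ => (1 / (n : ℝ)) * ∑' x : ℤ, discreteLaplacian f n x ^ 2) atTop
      (𝓝 (∫ t, deriv (deriv f) t ^ 2)) := by
  have hbound (n : ℕ) (t : ℝ) :
      ‖discreteLaplacian f n ⌊n * t⌋ ^ 2‖ ≤ (9 * D) ^ 2 * (1 + t ^ 2)⁻¹ := by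
    have h := abs_discreteLaplacian_floor_le hf hf' hD n t
    have ht : 1 ≤ 1 + t ^ 2 := by nlinarith [sq_nonneg t]
    rw [norm_pow, Real.norm_eq_abs]
    calc |discreteLaplacian f n ⌊n * t⌋| ^ 2 ≤ (9 * D / (1 + t ^ 2)) ^ 2 := by gcongr
      _ ≤ (9 * D) ^ 2 * (1 + t ^ 2)⁻¹ := by
        rw [div_pow, div_eq_mul_inv]
        gcongr
        nlinarith
  have hmeas (n : ℕ) : Measurable fun t : ℝ => discreteLaplacian f n ⌊n * t⌋ ^ 2 :=
    (measurable_from_top (f := fun x : ℤ => discreteLaplacian f n x ^ 2)).comp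
      (Int.measurable_floor.comp (measurable_const_mul _))
  have hstep := tendsto_integral_of_dominated_convergence _
    (fun n => (hmeas n).aestronglyMeasurable) (integrable_inv_one_add_sq.const_mul _)
    (fun n => .of_forall (hbound n))
    (.of_forall fun t => (tendsto_discreteLaplacian_floor hf hf' hf''.continuousAt).pow 2)
  refine hstep.congr' ?_
  filter_upwards [eventually_ne_atTop 0] with n hn
  rw [integral_comp_floor_mul_s15 (by positivity) (fun x => discreteLaplacian f n x ^ 2), one_div]

end DiscreteLaplacian

namespace SchwartzMap

theorem exists_abs_le_div_one_add_sq (g : 𝓢(ℝ, ℝ)) : ∃ D, ∀ y, |g y| ≤ D / (1 + y ^ 2) := by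
  refine ⟨2 ^ 2 * (Finset.Iic (2, 0)).sup (fun m => SchwartzMap.seminorm ℝ m.1 m.2) g, fun y => ?_⟩
  have h := one_add_le_sup_seminorm_apply (𝕜 := ℝ) (m := (2, 0)) le_rfl le_rfl g y
  simp only [norm_iteratedFDeriv_zero, Real.norm_eq_abs] at h
  rw [le_div_iff₀ (by positivity)]
  refine le_trans ?_ h
  rw [mul_comm]
  gcongr
  nlinarith [abs_nonneg y, sq_abs y]

theorem deriv_eq_derivCLM (g : 𝓢(ℝ, ℝ)) : deriv g = derivCLM ℝ ℝ g :=
  funext fun y => (derivCLM_apply ℝ g y).symm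

end SchwartzMap

/-- For every Schwartz function `u`, the discrete Laplacian energies converge:
`lim_{n→∞} (1/n) Σ_{x∈ℤ} (n²·(u((x+1)/n) + u((x−1)/n) − 2u(x/n)))² = ∫_ℝ (u''(x))² dx`. -/
theorem discrete_laplacian_energy_tendsto (u : SchwartzMap ℝ ℝ) :
    Tendsto
      (fun n : ℕ =>
        (1 / (n : ℝ)) *
          ∑' x : ℤ,
            ((n : ℝ) ^ 2 *
              (u (((x : ℝ) + 1) / n) + u (((x : ℝ) - 1) / n) - 2 * u ((x : ℝ) / n))) ^ 2)
      atTop (nhds (∫ x : ℝ, (deriv (deriv (⇑u)) x) ^ 2)) := by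
  have hu' := SchwartzMap.deriv_eq_derivCLM u
  have hu'' : deriv (deriv u) = SchwartzMap.derivCLM ℝ ℝ (SchwartzMap.derivCLM ℝ ℝ u) := by
    rw [hu', SchwartzMap.deriv_eq_derivCLM]
  obtain ⟨D, hD⟩ :=
    SchwartzMap.exists_abs_le_div_one_add_sq (SchwartzMap.derivCLM ℝ ℝ (SchwartzMap.derivCLM ℝ ℝ u))
  exact tendsto_discreteLaplacian_energy u.differentiable (hu' ▸ SchwartzMap.differentiable _)
    (hu'' ▸ SchwartzMap.continuous _) (hu'' ▸ hD)
end

section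
/- Let X₁ and X₂ be real random variables on the same probability space with E[X₁²] < ∞ and E[X₂⁴] < ∞, and set X = X₁ + X₂. Then for every M > 0, E[ X² · 1_{X² > M} ] ≤ 2·( E[X₁²] + √( E[X₂⁴]·E[X²] / M ) ). -/
/-!
Split `X² ≤ 2X₁² + 2X₂²` on the event `A = {X² > M}`. The `X₁` part is bounded by its full
second moment. For the `X₂` part, Cauchy–Schwarz against `1_A` gives
`E[X₂² 1_A] ≤ √(E[X₂⁴] μ(A))`, and Markov's inequality gives `μ(A) ≤ E[X²] / M`.
-/

open MeasureTheory

section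

variable {α : Type*} [MeasurableSpace α] {μ : Measure α}

lemma MeasureTheory.MemLp.sq {f : α → ℝ} (hf : MemLp f 4 μ) : MemLp (fun x => f x ^ 2) 2 μ := by
  refine (memLp_two_iff_integrable_sq (hf.aestronglyMeasurable.pow 2)).2 ?_
  refine (hf.integrable_norm_pow (p := 4) (by norm_num)).congr (ae_of_all _ fun x => ?_)
  simp only [Pi.pow_apply, Real.norm_eq_abs, ← pow_mul]
  exact Even.pow_abs ⟨2, rfl⟩ _

lemma integral_add_sq_le {f g : α → ℝ} (hf : MemLp f 2 μ) (hg : MemLp g 2 μ) :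
    ∫ x, (f x + g x) ^ 2 ∂μ ≤ 2 * (∫ x, f x ^ 2 ∂μ + ∫ x, g x ^ 2 ∂μ) := by
  rw [← integral_add hf.integrable_sq hg.integrable_sq, ← integral_const_mul]
  exact integral_mono (hf.add hg).integrable_sq
    ((hf.integrable_sq.add hg.integrable_sq).const_mul 2) fun x => add_sq_le

lemma measureReal_lt_le_integral_div [IsFiniteMeasure μ] {f : α → ℝ} (hf_nonneg : 0 ≤ᵐ[μ] f)
    (hf : Integrable f μ) {ε : ℝ} (hε : 0 < ε) :
    μ.real {x | ε < f x} ≤ (∫ x, f x ∂μ) / ε := by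
  rw [le_div_iff₀' hε]
  calc ε * μ.real {x | ε < f x} ≤ ε * μ.real {x | ε ≤ f x} :=
        mul_le_mul_of_nonneg_left
          (measureReal_mono (Set.ofPred_subset_ofPred.2 fun _ => le_of_lt)) hε.le
    _ ≤ ∫ x, f x ∂μ := mul_meas_ge_le_integral_of_nonneg hf_nonneg hf ε

lemma setIntegral_le_sqrt_setIntegral_sq_mul_measureReal [IsFiniteMeasure μ] {f : α → ℝ}
    (hf_nonneg : 0 ≤ᵐ[μ] f) (hf : MemLp f 2 μ) (s : Set α) :
    ∫ x in s, f x ∂μ ≤ √((∫ x in s, f x ^ 2 ∂μ) * μ.real s) := by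
  have hCS := integral_mul_le_Lp_mul_Lq_of_nonneg (μ := μ.restrict s)
    Real.HolderConjugate.two_two (ae_restrict_of_ae hf_nonneg) (ae_of_all _ fun _ => zero_le_one)
    (by simpa using hf.restrict s) (by simpa using memLp_const (1 : ℝ))
  rw [Real.sqrt_mul (integral_nonneg fun x => sq_nonneg _), Real.sqrt_eq_rpow, Real.sqrt_eq_rpow]
  simpa using hCS

lemma setIntegral_sq_le_sqrt_integral_pow_four_mul_measureReal [IsFiniteMeasure μ] {f : α → ℝ}
    (hf : MemLp f 4 μ) (s : Set α) :
    ∫ x in s, f x ^ 2 ∂μ ≤ √((∫ x, f x ^ 4 ∂μ) * μ.real s) := by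
  have hpow : ∀ x, (f x ^ 2) ^ 2 = f x ^ 4 := fun x => by ring
  have hf4 : Integrable (fun x => f x ^ 4) μ := by simpa only [hpow] using hf.sq.integrable_sq
  calc ∫ x in s, f x ^ 2 ∂μ ≤ √((∫ x in s, f x ^ 4 ∂μ) * μ.real s) := by
        simpa only [hpow] using setIntegral_le_sqrt_setIntegral_sq_mul_measureReal
          (ae_of_all _ fun x => sq_nonneg (f x)) hf.sq s
    _ ≤ √((∫ x, f x ^ 4 ∂μ) * μ.real s) :=
        Real.sqrt_le_sqrt <| mul_le_mul_of_nonneg_right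
          (setIntegral_le_integral hf4 (ae_of_all _ fun x => by positivity)) measureReal_nonneg

end

/-- Truncation estimate: if `X = X₁ + X₂` with `E[X₁²] < ∞` and `E[X₂⁴] < ∞`, then for every
`M > 0`, `E[X²·1_{X²>M}] ≤ 2(E[X₁²] + √(E[X₂⁴]·E[X²]/M))`. -/
theorem truncated_second_moment_bound
    {Ω : Type*} [MeasurableSpace Ω] (μ : Measure Ω) [IsProbabilityMeasure μ]
    (X₁ X₂ : Ω → ℝ) (h1 : MemLp X₁ 2 μ) (h2 : MemLp X₂ 4 μ) (M : ℝ) (hM : 0 < M) :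
    ∫ ω in {ω | (X₁ ω + X₂ ω) ^ 2 > M}, (X₁ ω + X₂ ω) ^ 2 ∂μ
      ≤ 2 * ((∫ ω, X₁ ω ^ 2 ∂μ) +
          Real.sqrt ((∫ ω, X₂ ω ^ 4 ∂μ) * (∫ ω, (X₁ ω + X₂ ω) ^ 2 ∂μ) / M)) := by
  set A := {ω | (X₁ ω + X₂ ω) ^ 2 > M}
  have hX₂ : MemLp X₂ 2 μ := h2.mono_exponent (by norm_num)
  have hMarkov : μ.real A ≤ (∫ ω, (X₁ ω + X₂ ω) ^ 2 ∂μ) / M :=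
    measureReal_lt_le_integral_div (ae_of_all _ fun ω => sq_nonneg _)
      (h1.add hX₂).integrable_sq hM
  calc ∫ ω in A, (X₁ ω + X₂ ω) ^ 2 ∂μ
      ≤ 2 * (∫ ω in A, X₁ ω ^ 2 ∂μ + ∫ ω in A, X₂ ω ^ 2 ∂μ) :=
        integral_add_sq_le (h1.restrict A) (hX₂.restrict A)
    _ ≤ 2 * (∫ ω, X₁ ω ^ 2 ∂μ + √((∫ ω, X₂ ω ^ 4 ∂μ) * μ.real A)) := by
        gcongr 2 * (?_ + ?_)
        · exact setIntegral_le_integral h1.integrable_sq (ae_of_all _ fun ω => sq_nonneg _)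
        · exact setIntegral_sq_le_sqrt_integral_pow_four_mul_measureReal h2 A
    _ ≤ _ := by
        rw [mul_div_assoc]
        gcongr
end

section
/- With F, θ, θ_M and F_M as defined, the discrete energies of F_M − F_N vanish uniformly in the scaling parameter: lim_{M,N→∞} sup_{n∈ℕ, n≥1} (1/n) Σ_{x∈ℤ} ( n·( (F_M − F_N)((x+1)/n) − (F_M − F_N)(x/n) ) )² = 0; that is, for every ε > 0 there exists M₀ such that for all M, N ≥ M₀ and all n ≥ 1 the discrete energy E_n(F_M − F_N) is less than ε. -/
/-!
Write `Z = ∫₀¹ e^{−1/(y(1−y))} dy`, so that `θ` is antitone and `1/Z`-Lipschitz, and let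
`m = min(M, N)`. Both cutoffs equal `1` on `x ≤ 0`, so `u = F_M − F_N = F·(θ_M − θ_N)` vanishes
there. For `a ≥ 0` and `h = 1/n`, the increment `u(a+h) − u(a)` is
`(F(a+h) − F(a))·(θ_M − θ_N)(a+h) + F(a)·(θ_M(a+h) − θ_M(a)) − F(a)·(θ_N(a+h) − θ_N(a))`.
Since `F(a+h) − F(a) ≤ e^{−a} h`, `|θ_M − θ_N|(t) ≤ min(1, t/(mZ))` and `e^{−a}(a+h) ≤ 1`, the
first term squared is at most `e^{−a} h²/(mZ)`, and `Σₖ e^{−k/n} ≤ e n`. The increments of `θ_M`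
are at most `h/(MZ)` and vanish once `a ≥ M`, so the `Mn` nonzero ones contribute `O(1/M)`.
Altogether `E_n(F_M − F_N) = O(1/m)`, uniformly in `n`.
-/

open MeasureTheory Filter

noncomputable def F (x : ℝ) : ℝ := (1 + Real.exp (-x))⁻¹

noncomputable def θ (x : ℝ) : ℝ :=
  (∫ y in Set.Ioi x, if 0 < y ∧ y < 1 then Real.exp (-(1 / (y * (1 - y)))) else 0) /
    (∫ y in Set.Ioo (0 : ℝ) 1, Real.exp (-(1 / (y * (1 - y)))))

noncomputable def FM (M : ℕ) (x : ℝ) : ℝ := F x * θ (x / M)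

noncomputable def discreteEnergy (n : ℕ) (u : ℝ → ℝ) : ℝ :=
  (1 / (n : ℝ)) * ∑' x : ℤ, ((n : ℝ) * (u (((x : ℝ) + 1) / n) - u ((x : ℝ) / n))) ^ 2

open Real Set

noncomputable def bump (y : ℝ) : ℝ :=
  if 0 < y ∧ y < 1 then exp (-(1 / (y * (1 - y)))) else 0

noncomputable def bumpMass : ℝ := ∫ y in Ioo (0 : ℝ) 1, exp (-(1 / (y * (1 - y))))

lemma θ_eq_setIntegral_bump_div (x : ℝ) : θ x = (∫ y in Ioi x, bump y) / bumpMass := rfl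

lemma bump_eq_indicator : bump = (Ioo 0 1).indicator fun y => exp (-(1 / (y * (1 - y)))) := by
  ext y
  simp [bump, indicator, mem_Ioo]

lemma bump_nonneg (y : ℝ) : 0 ≤ bump y := by
  unfold bump; split <;> positivity

lemma bump_le_one (y : ℝ) : bump y ≤ 1 := by
  unfold bump
  split_ifs with hy
  · have : 0 < y * (1 - y) := mul_pos hy.1 (by linarith [hy.2])
    exact exp_le_one_iff.2 (neg_nonpos.2 (by positivity))
  · exact zero_le_one

lemma integrableOn_exp_neg_inv_Ioo :
    IntegrableOn (fun y => exp (-(1 / (y * (1 - y))))) (Ioo 0 1) := by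
  refine IntegrableOn.of_bound (by simp) (by measurability) 1 ?_
  filter_upwards [ae_restrict_mem measurableSet_Ioo] with y hy
  simpa [bump, hy.1, hy.2, abs_of_pos (exp_pos _)] using bump_le_one y

lemma integrable_bump : Integrable bump := by
  rw [bump_eq_indicator, integrable_indicator_iff measurableSet_Ioo]
  exact integrableOn_exp_neg_inv_Ioo

lemma bumpMass_pos : 0 < bumpMass := by
  have : NeZero (volume.restrict (Ioo (0 : ℝ) 1)) := ⟨by simp⟩
  exact integral_exp_pos integrableOn_exp_neg_inv_Ioo

lemma setIntegral_Ioi_bump_of_nonpos {x : ℝ} (hx : x ≤ 0) :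
    ∫ y in Ioi x, bump y = bumpMass := by
  rw [bump_eq_indicator, setIntegral_indicator measurableSet_Ioo,
    inter_eq_self_of_subset_right (Ioo_subset_Ioi_self.trans (Ioi_subset_Ioi hx))]
  rfl

lemma setIntegral_Ioi_bump_of_one_le {x : ℝ} (hx : 1 ≤ x) : ∫ y in Ioi x, bump y = 0 := by
  rw [bump_eq_indicator, setIntegral_indicator measurableSet_Ioo,
    Ioi_inter_Ioo, Ioo_eq_empty (not_lt.2 (le_max_of_le_left hx)),
    Measure.restrict_empty, integral_zero_measure]

lemma setIntegral_Ioi_bump_sub {x y : ℝ} (hxy : x ≤ y) :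
    (∫ t in Ioi x, bump t) - ∫ t in Ioi y, bump t = ∫ t in Ioc x y, bump t := by
  have := setIntegral_union (Ioc_disjoint_Ioi (le_refl y)) measurableSet_Ioi
    integrable_bump.integrableOn integrable_bump.integrableOn (f := bump) (s := Ioc x y)
  rw [Ioc_union_Ioi_eq_Ioi hxy] at this
  linarith

lemma θ_sub_θ {x y : ℝ} (hxy : x ≤ y) : θ x - θ y = (∫ t in Ioc x y, bump t) / bumpMass := by
  rw [θ_eq_setIntegral_bump_div, θ_eq_setIntegral_bump_div, ← setIntegral_Ioi_bump_sub hxy,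
    div_sub_div_same]

lemma θ_eq_one_of_nonpos {x : ℝ} (hx : x ≤ 0) : θ x = 1 := by
  rw [θ_eq_setIntegral_bump_div, setIntegral_Ioi_bump_of_nonpos hx, div_self bumpMass_pos.ne']

lemma θ_eq_zero_of_one_le {x : ℝ} (hx : 1 ≤ x) : θ x = 0 := by
  rw [θ_eq_setIntegral_bump_div, setIntegral_Ioi_bump_of_one_le hx, zero_div]

lemma θ_antitone : Antitone θ := fun x y hxy => by
  rw [← sub_nonneg, θ_sub_θ hxy]
  exact div_nonneg (setIntegral_nonneg measurableSet_Ioc fun t _ => bump_nonneg t) bumpMass_pos.le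

lemma θ_sub_le {x y : ℝ} (hxy : x ≤ y) : θ x - θ y ≤ (y - x) / bumpMass := by
  rw [θ_sub_θ hxy]
  gcongr
  · exact bumpMass_pos.le
  · have := norm_setIntegral_le_of_norm_le_const (μ := volume) (f := bump) (s := Ioc x y) (C := 1)
      measure_Ioc_lt_top fun t _ => by simpa [abs_of_nonneg (bump_nonneg t)] using bump_le_one t
    simpa [hxy] using (le_abs_self _).trans this

lemma θ_mem_Icc (x : ℝ) : θ x ∈ Icc 0 1 := by
  constructor
  · simpa [θ_eq_zero_of_one_le (le_max_right x 1)] using θ_antitone (le_max_left x 1)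
  · simpa [θ_eq_one_of_nonpos (min_le_right x 0)] using θ_antitone (min_le_left x 0)

lemma sq_θ_div_sub_θ_div_le {P a b : ℝ} (hP : 0 < P) (hab : a ≤ b) :
    (θ (b / P) - θ (a / P)) ^ 2 ≤ if a < P then ((b - a) / (P * bumpMass)) ^ 2 else 0 := by
  have habP : a / P ≤ b / P := div_le_div_of_nonneg_right hab hP.le
  split_ifs with haP
  · have hle : θ (a / P) - θ (b / P) ≤ (b - a) / (P * bumpMass) := by
      simpa [sub_div, div_div] using θ_sub_le habP
    have := θ_antitone habP
    exact sq_le_sq' (by linarith) (by linarith)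
  · have ha : 1 ≤ a / P := (one_le_div hP).2 (not_lt.1 haP)
    simp [θ_eq_zero_of_one_le ha, θ_eq_zero_of_one_le (ha.trans habP)]

lemma one_sub_θ_div_le {P b : ℝ} (hP : 0 < P) (hb : 0 ≤ b) :
    1 - θ (b / P) ≤ b / (P * bumpMass) := by
  simpa [θ_eq_one_of_nonpos le_rfl, div_div] using θ_sub_le (div_nonneg hb hP.le)

lemma sq_θ_div_sub_θ_div_scale_le {P Q m b : ℝ} (hm : 0 < m) (hP : m ≤ P) (hQ : m ≤ Q)
    (hb : 0 ≤ b) : (θ (b / P) - θ (b / Q)) ^ 2 ≤ b / (m * bumpMass) := by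
  have hmass := bumpMass_pos
  have hbP : b / (P * bumpMass) ≤ b / (m * bumpMass) := by gcongr
  have hbQ : b / (Q * bumpMass) ≤ b / (m * bumpMass) := by gcongr
  have hθP := one_sub_θ_div_le (hm.trans_le hP) hb
  have hθQ := one_sub_θ_div_le (hm.trans_le hQ) hb
  obtain ⟨hP0, hP1⟩ := θ_mem_Icc (b / P)
  obtain ⟨hQ0, hQ1⟩ := θ_mem_Icc (b / Q)
  have habs : |θ (b / P) - θ (b / Q)| ≤ b / (m * bumpMass) :=
    abs_sub_le_iff.2 ⟨by linarith, by linarith⟩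
  calc (θ (b / P) - θ (b / Q)) ^ 2 = |θ (b / P) - θ (b / Q)| * |θ (b / P) - θ (b / Q)| := by
        rw [← sq_abs, sq]
    _ ≤ b / (m * bumpMass) * 1 :=
        mul_le_mul habs (abs_sub_le_iff.2 ⟨by linarith, by linarith⟩) (abs_nonneg _) (by positivity)
    _ = b / (m * bumpMass) := mul_one _

lemma F_pos (x : ℝ) : 0 < F x := by
  unfold F; positivity

lemma F_le_one (x : ℝ) : F x ≤ 1 :=
  inv_le_one_of_one_le₀ (le_add_of_nonneg_right (exp_pos _).le)

lemma abs_F_sub_F_le {a b : ℝ} (hab : a ≤ b) : |F b - F a| ≤ exp (-a) * (b - a) := by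
  have hF : F b - F a = F a * F b * (exp (-a) - exp (-b)) := by
    unfold F; field_simp; ring
  have hexp : exp (-b) = exp (-a) * exp (-(b - a)) := by rw [← exp_add]; ring_nf
  have hdiff_nonneg : 0 ≤ exp (-a) - exp (-b) := sub_nonneg.2 (exp_le_exp.2 (by linarith))
  have hdiff_le : exp (-a) - exp (-b) ≤ exp (-a) * (b - a) := by
    rw [hexp]; nlinarith [add_one_le_exp (-(b - a)), exp_pos (-a)]
  have hFF : F a * F b ≤ 1 := mul_le_one₀ (F_le_one a) (F_pos b).le (F_le_one b)
  rw [hF, abs_of_nonneg (mul_nonneg (mul_pos (F_pos a) (F_pos b)).le hdiff_nonneg)]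
  nlinarith [mul_pos (F_pos a) (F_pos b)]

lemma exp_neg_mul_le_one {a b : ℝ} (hb : b ≤ a + 1) : exp (-a) * b ≤ 1 := by
  rw [exp_neg, inv_mul_le_one₀ (exp_pos a)]
  linarith [add_one_le_exp a]

lemma sq_FM_sub_FM_sub_le {M N : ℕ} {m a b : ℝ} (hm : 0 < m) (hM : m ≤ M) (hN : m ≤ N)
    (ha : 0 ≤ a) (hab : a ≤ b) (hba : b ≤ a + 1) :
    ((FM M b - FM N b) - (FM M a - FM N a)) ^ 2 ≤
      3 * (exp (-a) * (b - a) ^ 2 / (m * bumpMass)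
        + (if a < M then ((b - a) / (M * bumpMass)) ^ 2 else 0)
        + (if a < N then ((b - a) / (N * bumpMass)) ^ 2 else 0)) := by
  set p := (F b - F a) * (θ (b / M) - θ (b / N))
  have hsplit : (FM M b - FM N b) - (FM M a - FM N a) =
      p + F a * (θ (b / M) - θ (a / M)) - F a * (θ (b / N) - θ (a / N)) := by
    simp only [FM, p]; ring
  have hp : p ^ 2 ≤ exp (-a) * (b - a) ^ 2 / (m * bumpMass) := by
    have hmass := bumpMass_pos
    calc p ^ 2 = |F b - F a| ^ 2 * (θ (b / M) - θ (b / N)) ^ 2 := by rw [mul_pow, sq_abs]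
      _ ≤ (exp (-a) * (b - a)) ^ 2 * (b / (m * bumpMass)) := by
          gcongr
          exacts [abs_F_sub_F_le hab, sq_θ_div_sub_θ_div_scale_le hm hM hN (ha.trans hab)]
      _ = exp (-a) * (b - a) ^ 2 / (m * bumpMass) * (exp (-a) * b) := by ring
      _ ≤ exp (-a) * (b - a) ^ 2 / (m * bumpMass) * 1 := by
          gcongr
          exact exp_neg_mul_le_one hba
      _ = exp (-a) * (b - a) ^ 2 / (m * bumpMass) := mul_one _
  have hcut : ∀ P : ℕ, m ≤ P → (F a * (θ (b / P) - θ (a / P))) ^ 2 ≤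
      if a < P then ((b - a) / (P * bumpMass)) ^ 2 else 0 := fun P hP => by
    rw [mul_pow]
    refine (mul_le_of_le_one_left (sq_nonneg _) ?_).trans (sq_θ_div_sub_θ_div_le (by linarith) hab)
    exact pow_le_one₀ (F_pos a).le (F_le_one a)
  have hsq : ∀ p q r : ℝ, (p + q - r) ^ 2 ≤ 3 * (p ^ 2 + q ^ 2 + r ^ 2) := fun p q r => by
    nlinarith [sq_nonneg (p - q), sq_nonneg (p + r), sq_nonneg (q + r)]
  rw [hsplit]
  refine (hsq _ _ _).trans ?_
  linarith [hcut M hM, hcut N hN]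

lemma tsum_exp_nat_mul_neg_le {t : ℝ} (ht : 0 < t) : ∑' k : ℕ, exp (k * -t) ≤ exp t / t := by
  simp_rw [exp_nat_mul]
  rw [tsum_geometric_of_lt_one (exp_pos _).le (exp_lt_one_iff.2 (neg_lt_zero.2 ht))]
  have h : t * exp (-t) ≤ 1 - exp (-t) := by
    have := add_one_le_exp t
    rw [exp_neg]; field_simp; linarith
  calc (1 - exp (-t))⁻¹ ≤ (t * exp (-t))⁻¹ := inv_anti₀ (by positivity) h
    _ = exp t / t := by rw [exp_neg]; field_simp

lemma tsum_exp_neg_nat_div_le {n : ℕ} (hn : 0 < n) : ∑' k : ℕ, exp (-(k / n)) ≤ exp 1 * n := by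
  have hnR : (0 : ℝ) < n := Nat.cast_pos.2 hn
  calc ∑' k : ℕ, exp (-(k / n)) = ∑' k : ℕ, exp (k * -(1 / n)) := by
        refine tsum_congr fun k => ?_
        ring_nf
    _ ≤ exp (1 / n) / (1 / n) := tsum_exp_nat_mul_neg_le (by positivity)
    _ ≤ exp 1 * n := by
        rw [div_div_eq_mul_div, div_one]
        gcongr
        exact div_le_one_of_le₀ (Nat.one_le_cast.2 hn) hnR.le

lemma summable_exp_neg_nat_div {n : ℕ} (hn : 0 < n) : Summable fun k : ℕ => exp (-(k / n)) := by
  simpa [div_eq_mul_inv, mul_comm] using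
    summable_exp_nat_mul_iff.2 (neg_lt_zero.2 (inv_pos.2 (Nat.cast_pos.2 hn) : (0 : ℝ) < (n : ℝ)⁻¹))

lemma summable_ite_lt (K : ℕ) (C : ℝ) : Summable fun k : ℕ => if k < K then C else 0 :=
  summable_of_ne_finset_zero (s := Finset.range K) fun k hk => if_neg (by simpa using hk)

lemma tsum_ite_lt (K : ℕ) (C : ℝ) : ∑' k : ℕ, (if k < K then C else 0) = K * C := by
  rw [tsum_eq_sum (s := Finset.range K) fun k hk => if_neg (by simpa using hk),
    Finset.sum_ite_of_true fun k hk => Finset.mem_range.1 hk]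
  simp

lemma discreteEnergy_le_tsum_div {u : ℝ → ℝ} {n : ℕ} (hu : ∀ x ≤ 0, u x = 0) {A : ℕ → ℝ}
    (hA : Summable A) (hle : ∀ k : ℕ, ((n : ℝ) * (u ((k + 1) / n) - u (k / n))) ^ 2 ≤ A k) :
    discreteEnergy n u ≤ (∑' k, A k) / n := by
  set T : ℤ → ℝ := fun x => ((n : ℝ) * (u (((x : ℝ) + 1) / n) - u ((x : ℝ) / n))) ^ 2
  have hneg : ∀ k : ℕ, T (-(k + 1)) = 0 := fun k => by
    have h₁ : ((-(k + 1) : ℤ) : ℝ) + 1 ≤ 0 := by push_cast; linarith [k.cast_nonneg (α := ℝ)]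
    have h₀ : ((-(k + 1) : ℤ) : ℝ) ≤ 0 := by linarith
    simp only [T, hu _ (div_nonpos_of_nonpos_of_nonneg h₁ n.cast_nonneg),
      hu _ (div_nonpos_of_nonpos_of_nonneg h₀ n.cast_nonneg)]
    simp
  have hnat : Summable fun k : ℕ => T k :=
    hA.of_nonneg_of_le (fun k => sq_nonneg _) (by simpa [T] using hle)
  have hsum : ∑' x : ℤ, T x = ∑' k : ℕ, T k := by
    rw [tsum_of_nat_of_neg_add_one hnat (by simpa only [hneg] using summable_zero)]
    simp only [hneg, tsum_zero, add_zero]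
  unfold discreteEnergy
  rw [hsum, one_div_mul_eq_div]
  exact div_le_div_of_nonneg_right (hnat.tsum_le_tsum (by simpa [T] using hle) hA) n.cast_nonneg

lemma FM_sub_FM_eq_zero_of_nonpos (M N : ℕ) {x : ℝ} (hx : x ≤ 0) : FM M x - FM N x = 0 := by
  simp only [FM, θ_eq_one_of_nonpos (div_nonpos_of_nonpos_of_nonneg hx (Nat.cast_nonneg _)),
    sub_self]

lemma sq_grad_FM_sub_FM_le {M N n : ℕ} {m : ℝ} (hm : 0 < m) (hM : m ≤ M) (hN : m ≤ N)
    (hn : 0 < n) (k : ℕ) :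
    ((n : ℝ) * ((FM M ((k + 1) / n) - FM N ((k + 1) / n)) - (FM M (k / n) - FM N (k / n)))) ^ 2 ≤
      3 * (exp (-(k / n)) / (m * bumpMass)
        + (if k < M * n then 1 / (M * bumpMass) ^ 2 else 0)
        + (if k < N * n then 1 / (N * bumpMass) ^ 2 else 0)) := by
  have hnR : (0 : ℝ) < n := Nat.cast_pos.2 hn
  have hcond : ∀ P : ℕ, (k / n : ℝ) < P ↔ k < P * n := fun P => by
    rw [div_lt_iff₀ hnR]; norm_cast
  have hstep : ((k : ℝ) + 1) / n - k / n = 1 / n := by ring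
  have h := sq_FM_sub_FM_sub_le hm hM hN (a := k / n) (b := (k + 1) / n) (by positivity)
    (by gcongr; linarith)
    (by rw [add_div]; linarith [div_le_one_of_le₀ (Nat.one_le_cast.2 hn) hnR.le])
  rw [hstep] at h
  rw [mul_pow]
  refine (mul_le_mul_of_nonneg_left h (by positivity)).trans_eq ?_
  have hZ : 0 < bumpMass := bumpMass_pos
  have hMR : 0 < (M : ℝ) := hm.trans_le hM
  have hNR : 0 < (N : ℝ) := hm.trans_le hN
  simp only [hcond]
  split_ifs <;> field_simp <;> ring

lemma discreteEnergy_FM_sub_FM_le {M N n : ℕ} {m : ℝ} (hm : 0 < m) (hM : m ≤ M) (hN : m ≤ N)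
    (hn : 0 < n) :
    discreteEnergy n (fun x => FM M x - FM N x) ≤ 3 * (exp 1 + 2 / bumpMass) / (m * bumpMass) := by
  have hZ : 0 < bumpMass := bumpMass_pos
  have hMR : 0 < (M : ℝ) := hm.trans_le hM
  have hNR : 0 < (N : ℝ) := hm.trans_le hN
  set A : ℕ → ℝ := fun k => 3 * (exp (-(k / n)) / (m * bumpMass)
      + (if k < M * n then 1 / (M * bumpMass) ^ 2 else 0)
      + (if k < N * n then 1 / (N * bumpMass) ^ 2 else 0))
  have hA : Summable A :=
    (((summable_exp_neg_nat_div hn).div_const _).add (summable_ite_lt _ _)).add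
      (summable_ite_lt _ _) |>.mul_left 3
  have hsum : ∑' k, A k ≤ 3 * (exp 1 * n / (m * bumpMass) + M * n * (1 / (M * bumpMass) ^ 2)
      + N * n * (1 / (N * bumpMass) ^ 2)) := by
    simp only [A]
    rw [tsum_mul_left, Summable.tsum_add (((summable_exp_neg_nat_div hn).div_const _).add
        (summable_ite_lt _ _)) (summable_ite_lt _ _),
      Summable.tsum_add ((summable_exp_neg_nat_div hn).div_const _) (summable_ite_lt _ _),
      tsum_ite_lt, tsum_ite_lt, tsum_div_const]
    push_cast
    gcongr
    exact tsum_exp_neg_nat_div_le hn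
  calc discreteEnergy n (fun x => FM M x - FM N x) ≤ (∑' k, A k) / n :=
        discreteEnergy_le_tsum_div (fun x hx => FM_sub_FM_eq_zero_of_nonpos M N hx) hA
          (sq_grad_FM_sub_FM_le hm hM hN hn)
    _ ≤ 3 * (exp 1 * n / (m * bumpMass) + M * n * (1 / (M * bumpMass) ^ 2)
      + N * n * (1 / (N * bumpMass) ^ 2)) / n := by gcongr
    _ = 3 * (exp 1 / (m * bumpMass) + 1 / (M * bumpMass ^ 2) + 1 / (N * bumpMass ^ 2)) := by
        field_simp
    _ ≤ 3 * (exp 1 / (m * bumpMass) + 1 / (m * bumpMass ^ 2) + 1 / (m * bumpMass ^ 2)) := by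
        gcongr
    _ = 3 * (exp 1 + 2 / bumpMass) / (m * bumpMass) := by field_simp; ring

/-- The discrete energies of `F_M − F_N` vanish uniformly in the scaling parameter: for
every `ε > 0` there is `M₀` such that for all `M, N ≥ M₀` and every `n ≥ 1`,
`E_n(F_M − F_N) < ε`. -/
theorem discrete_energy_FM_cauchy_uniform :
    ∀ ε : ℝ, 0 < ε → ∃ M₀ : ℕ, ∀ M N : ℕ, M₀ ≤ M → M₀ ≤ N → ∀ n : ℕ, 1 ≤ n →
      discreteEnergy n (fun x => FM M x - FM N x) < ε := by
  intro ε hε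
  set C := 3 * (exp 1 + 2 / bumpMass) / bumpMass
  have hC : 0 < C := by have := bumpMass_pos; positivity
  obtain ⟨M₀, hM₀⟩ := exists_nat_gt (C / ε)
  have hM₀pos : (0 : ℝ) < M₀ := (div_pos hC hε).trans hM₀
  refine ⟨M₀, fun M N hM hN n hn => ?_⟩
  calc discreteEnergy n (fun x => FM M x - FM N x)
      ≤ 3 * (exp 1 + 2 / bumpMass) / (M₀ * bumpMass) :=
        discreteEnergy_FM_sub_FM_le hM₀pos (by exact_mod_cast hM) (by exact_mod_cast hN) hn
    _ = C / M₀ := by ring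
    _ < ε := (div_lt_iff₀ hM₀pos).2 (by rwa [div_lt_iff₀ hε, mul_comm] at hM₀)
end
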